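/- arXiv:2511.18967 — 3 statements merged into one kernel-verified Lean document; each statement's English description precedes it below -/
import Mathlib

section
/- Define B = (1/√2)·((1, i); (i, 1)) and M(λ) = λ^{-σ₃/4} B ((1 + e^{-πi/2}√λ)/√(λ+1))^{-i√2 γ σ₃} for λ ∈ ℂ \ (-∞, 0], with principal branches. Then B is unitary with B⁻¹ = (1/√2)·((1, -i); (-i, 1)), det B = 1, and for λ ∈ (-1, 0) the boundary values satisfy M₊(λ) = M₋(λ)·((0, 1); (-1, 0)). -/
open Filter Complex

lemma cpow_tendsto_upper (x : ℝ) (hx : x < 0) (w : ℂ) :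
    Tendsto (fun z : ℂ => z ^ w) (nhdsWithin (x : ℂ) {z : ℂ | 0 < z.im})
      (nhds (Complex.exp (((Real.log (-x) : ℝ) + Real.pi * Complex.I) * w))) := by
  have hre : (x : ℂ).re < 0 := by simpa using hx
  have him : (x : ℂ).im = 0 := by simp
  have hlog := Complex.tendsto_log_nhdsWithin_im_nonneg_of_re_neg_of_im_zero hre him
  have habs : ‖(x : ℂ)‖ = -x := by
    rw [Complex.norm_real, Real.norm_eq_abs, abs_of_neg hx]
  rw [habs] at hlog
  have hlog' : Tendsto Complex.log (nhdsWithin (x : ℂ) {z : ℂ | 0 < z.im})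
      (nhds ((Real.log (-x) : ℂ) + Real.pi * Complex.I)) :=
    hlog.mono_left (nhdsWithin_mono _ (Set.setOf_subset_setOf.2 fun z hz => le_of_lt hz))
  have h2 : Tendsto (fun z : ℂ => Complex.exp (Complex.log z * w))
      (nhdsWithin (x : ℂ) {z : ℂ | 0 < z.im})
      (nhds (Complex.exp (((Real.log (-x) : ℝ) + Real.pi * Complex.I) * w))) :=
    (Complex.continuous_exp.continuousAt.tendsto).comp (hlog'.mul_const w)
  apply h2.congr'
  filter_upwards [self_mem_nhdsWithin] with z hz
  have hz0 : z ≠ 0 := by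
    intro h; rw [h] at hz; simp at hz
  rw [Complex.cpow_def_of_ne_zero hz0]

lemma cpow_tendsto_lower (x : ℝ) (hx : x < 0) (w : ℂ) :
    Tendsto (fun z : ℂ => z ^ w) (nhdsWithin (x : ℂ) {z : ℂ | z.im < 0})
      (nhds (Complex.exp (((Real.log (-x) : ℝ) - Real.pi * Complex.I) * w))) := by
  have hre : (x : ℂ).re < 0 := by simpa using hx
  have him : (x : ℂ).im = 0 := by simp
  have hlog := Complex.tendsto_log_nhdsWithin_im_neg_of_re_neg_of_im_zero hre him
  have habs : ‖(x : ℂ)‖ = -x := by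
    rw [Complex.norm_real, Real.norm_eq_abs, abs_of_neg hx]
  rw [habs] at hlog
  have h2 : Tendsto (fun z : ℂ => Complex.exp (Complex.log z * w))
      (nhdsWithin (x : ℂ) {z : ℂ | z.im < 0})
      (nhds (Complex.exp (((Real.log (-x) : ℝ) - Real.pi * Complex.I) * w))) :=
    (Complex.continuous_exp.continuousAt.tendsto).comp (hlog.mul_const w)
  apply h2.congr'
  filter_upwards [self_mem_nhdsWithin] with z hz
  have hz0 : z ≠ 0 := by
    intro h; rw [h] at hz; simp at hz
  rw [Complex.cpow_def_of_ne_zero hz0]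

lemma tendsto_matrix_fin_two {α : Type*} {l : Filter α} {f1 f2 f3 f4 : α → ℂ} {a1 a2 a3 a4 : ℂ}
    (h1 : Tendsto f1 l (nhds a1)) (h2 : Tendsto f2 l (nhds a2))
    (h3 : Tendsto f3 l (nhds a3)) (h4 : Tendsto f4 l (nhds a4)) :
    Tendsto (fun x => (!![f1 x, f2 x; f3 x, f4 x] : Matrix (Fin 2) (Fin 2) ℂ)) l
      (nhds !![a1, a2; a3, a4]) := by
  have hd : ∀ (p q r s : ℂ), (!![p, q; r, s] : Matrix (Fin 2) (Fin 2) ℂ) =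
      p • !![1,0;0,0] + q • !![0,1;0,0] + r • !![0,0;1,0] + s • !![0,0;0,1] := by
    intros p q r s; ext i j; fin_cases i <;> fin_cases j <;> simp
  rw [hd a1 a2 a3 a4]
  exact Tendsto.congr (fun x => (hd _ _ _ _).symm)
    ((((h1.smul_const _).add (h2.smul_const _)).add (h3.smul_const _)).add (h4.smul_const _))

/-- Properties of `B = (1/√2)·[[1,i],[i,1]]` and of the global parametrix
`M(λ) = λ^{-σ₃/4} B ((1+e^{-πi/2}√λ)/√(λ+1))^{-i√2γσ₃}` (principal branches):
`B` is unitary with `B⁻¹ = (1/√2)·[[1,-i],[-i,1]]`, `det B = 1`, and for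
`λ ∈ (-1,0)` the boundary values satisfy `M₊(λ) = M₋(λ)·[[0,1],[-1,0]]`. -/
theorem global_parametrix_M_properties (γ : ℝ)
    (B : Matrix (Fin 2) (Fin 2) ℂ)
    (hB : B = ((Real.sqrt 2 : ℝ) : ℂ)⁻¹ • !![1, Complex.I; Complex.I, 1])
    (c : ℂ → ℂ)
    (hc : ∀ z : ℂ, c z =
      (1 + Complex.exp (-(Real.pi / 2 : ℝ) * Complex.I) * z ^ ((1 : ℂ) / 2)) /
        (z + 1) ^ ((1 : ℂ) / 2))
    (M : ℂ → Matrix (Fin 2) (Fin 2) ℂ)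
    (hM : ∀ z : ℂ, M z =
      !![z ^ (-(1 : ℂ) / 4), 0; 0, z ^ ((1 : ℂ) / 4)] * B *
      !![c z ^ (-Complex.I * (Real.sqrt 2 : ℝ) * (γ : ℝ)), 0;
         0, c z ^ (Complex.I * (Real.sqrt 2 : ℝ) * (γ : ℝ))]) :
    B * star B = 1 ∧
    B⁻¹ = ((Real.sqrt 2 : ℝ) : ℂ)⁻¹ • !![1, -Complex.I; -Complex.I, 1] ∧
    B.det = 1 ∧
    (∀ lam : ℝ, lam ∈ Set.Ioo (-1 : ℝ) 0 →
      ∃ Mp Mm : Matrix (Fin 2) (Fin 2) ℂ,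
        Tendsto M (nhdsWithin (lam : ℂ) {z : ℂ | 0 < z.im}) (nhds Mp) ∧
        Tendsto M (nhdsWithin (lam : ℂ) {z : ℂ | z.im < 0}) (nhds Mm) ∧
        Mp = Mm * !![0, 1; -1, 0]) := by
  have hs2 : ((Real.sqrt 2 : ℝ) : ℂ) * ((Real.sqrt 2 : ℝ) : ℂ) = 2 := by
    rw [← Complex.ofReal_mul, Real.mul_self_sqrt (by norm_num : (0:ℝ) ≤ 2)]
    norm_num
  have hsne : ((Real.sqrt 2 : ℝ) : ℂ) ≠ 0 := by
    simp [Real.sqrt_eq_zero']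
  have hBright : B * (((Real.sqrt 2 : ℝ) : ℂ)⁻¹ • !![1, -Complex.I; -Complex.I, 1]) = 1 := by
    subst hB
    ext i j
    fin_cases i <;> fin_cases j <;>
      simp [Matrix.mul_apply, Fin.sum_univ_two, Matrix.smul_apply, Matrix.one_apply] <;>
      field_simp <;> ring_nf <;> (try simp only [Complex.I_sq]) <;> (try ring_nf) <;>
      first
        | rfl
        | linear_combination (-2:ℂ)*hs2
        | linear_combination (2:ℂ)*hs2
        | linear_combination hs2
        | linear_combination (-1:ℂ)*hs2
  refine ⟨?_, ?_, ?_, ?_⟩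
  · subst hB
    ext i j
    fin_cases i <;> fin_cases j <;>
      simp [Matrix.mul_apply, Fin.sum_univ_two, Matrix.smul_apply, Matrix.one_apply,
        Matrix.star_apply, Matrix.conjTranspose_apply] <;>
      field_simp <;> ring_nf <;> (try simp only [Complex.I_sq]) <;> (try ring_nf) <;>
      first
        | rfl
        | linear_combination (-2:ℂ)*hs2
        | linear_combination (2:ℂ)*hs2
        | linear_combination hs2
        | linear_combination (-1:ℂ)*hs2
  · exact Matrix.inv_eq_right_inv hBright
  · subst hB
    rw [Matrix.det_smul, Matrix.det_fin_two_of]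
    simp [Complex.I_mul_I]
    field_simp
    first
      | rfl
      | linear_combination (-2:ℂ)*hs2
      | linear_combination (2:ℂ)*hs2
      | linear_combination hs2
      | linear_combination (-1:ℂ)*hs2
  · intro lam hlam
    obtain ⟨hl1, hl0⟩ := hlam
    have hnl : (0:ℝ) < -lam := by linarith
    have hl1' : (0:ℝ) < lam + 1 := by linarith
    set s : ℝ := Real.sqrt (-lam) with hs_def
    set t : ℝ := Real.sqrt (lam + 1) with ht_def
    have hs0 : 0 < s := Real.sqrt_pos.2 hnl
    have ht0 : 0 < t := Real.sqrt_pos.2 hl1'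
    have hs2' : s ^ 2 = -lam := Real.sq_sqrt hnl.le
    have ht2' : t ^ 2 = lam + 1 := Real.sq_sqrt hl1'.le
    have hs1 : s < 1 := by
      nlinarith [hs2', hs0]
    set a : ℝ := (1 + s) / t with ha_def
    set b : ℝ := (1 - s) / t with hb_def
    have ha0 : 0 < a := by positivity
    have hb0 : 0 < b := div_pos (by linarith) ht0
    have hab : a * b = 1 := by
      rw [ha_def, hb_def]
      field_simp
      nlinarith [hs2', ht2']
    set w : ℂ := Complex.I * (Real.sqrt 2 : ℝ) * (γ : ℝ) with hw_def
    set Lp : ℂ := (Real.log (-lam) : ℝ) + Real.pi * Complex.I with hLp_def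
    set Lm : ℂ := (Real.log (-lam) : ℝ) - Real.pi * Complex.I with hLm_def
    set e1 : ℂ := Complex.exp (Lp * (-(1:ℂ) / 4)) with he1_def
    set e2 : ℂ := Complex.exp (Lp * ((1:ℂ) / 4)) with he2_def
    set f1 : ℂ := Complex.exp (Lm * (-(1:ℂ) / 4)) with hf1_def
    set f2 : ℂ := Complex.exp (Lm * ((1:ℂ) / 4)) with hf2_def
    -- exp facts
    have hexp_pos : Complex.exp ((Real.pi / 2 : ℝ) * Complex.I) = Complex.I := by
      rw [Complex.exp_mul_I, ← Complex.ofReal_cos, ← Complex.ofReal_sin]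
      simp
    have hexp_neg : Complex.exp (-(Real.pi / 2 : ℝ) * Complex.I) = -Complex.I := by
      rw [show (-(Real.pi / 2 : ℝ) * Complex.I : ℂ) = ((-(Real.pi/2) : ℝ) : ℂ) * Complex.I by
        push_cast; ring, Complex.exp_mul_I, ← Complex.ofReal_cos, ← Complex.ofReal_sin]
      simp
    have hsexp : s = Real.exp (Real.log (-lam) / 2) := by
      rw [hs_def, Real.sqrt_eq_rpow, Real.rpow_def_of_pos hnl]
      ring_nf
    have hexp_half_p : Complex.exp (Lp * ((1:ℂ) / 2)) = (s : ℂ) * Complex.I := by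
      rw [hLp_def, show (((Real.log (-lam) : ℝ) + Real.pi * Complex.I) * ((1:ℂ)/2)) =
        ((Real.log (-lam) / 2 : ℝ) : ℂ) + ((Real.pi / 2 : ℝ) : ℂ) * Complex.I by
          push_cast; ring, Complex.exp_add]
      rw [show (((Real.pi / 2 : ℝ) : ℂ) * Complex.I) = ((Real.pi / 2 : ℝ) : ℂ) * Complex.I from rfl,
        hexp_pos, ← Complex.ofReal_exp, ← hsexp]
    have hexp_half_m : Complex.exp (Lm * ((1:ℂ) / 2)) = -((s : ℂ) * Complex.I) := by
      rw [hLm_def, show (((Real.log (-lam) : ℝ) - Real.pi * Complex.I) * ((1:ℂ)/2)) =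
        ((Real.log (-lam) / 2 : ℝ) : ℂ) + ((-(Real.pi / 2) : ℝ) : ℂ) * Complex.I by
          push_cast; ring, Complex.exp_add, Complex.exp_mul_I, ← Complex.ofReal_cos,
          ← Complex.ofReal_sin, ← Complex.ofReal_exp, ← hsexp]
      simp
      try ring
    -- denominator limit
    have hval : ((lam : ℂ) + 1) ^ ((1:ℂ)/2) = (t : ℂ) := by
      rw [show ((lam : ℂ) + 1) = ((lam + 1 : ℝ) : ℂ) by push_cast; ring,
        show ((1:ℂ)/2) = (((1:ℝ)/2 : ℝ) : ℂ) by norm_num,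
        ← Complex.ofReal_cpow hl1'.le, ht_def, Real.sqrt_eq_rpow]
    have htne : ((t : ℝ) : ℂ) ≠ 0 := by
      exact_mod_cast ht0.ne'
    have hden : Tendsto (fun z : ℂ => (z + 1) ^ ((1:ℂ)/2)) (nhds (lam : ℂ))
        (nhds ((t : ℝ) : ℂ)) := by
      rw [← hval]
      exact ((continuousAt_cpow_const (by
        rw [Complex.mem_slitPlane_iff]; left; simp; linarith)).comp
        ((continuous_id.add continuous_const).continuousAt)).tendsto
    -- c limits
    have hcabs : ∀ (L : ℂ) (v : ℂ), Complex.exp (L * ((1:ℂ)/2)) = v →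
        Tendsto (fun z : ℂ => z ^ ((1:ℂ)/2)) (nhdsWithin (lam : ℂ) {z : ℂ | 0 < z.im})
          (nhds v) → True := fun _ _ _ _ => trivial
    have hhalf_p : Tendsto (fun z : ℂ => z ^ ((1:ℂ)/2))
        (nhdsWithin (lam : ℂ) {z : ℂ | 0 < z.im}) (nhds ((s : ℂ) * Complex.I)) := by
      have := cpow_tendsto_upper lam hl0 ((1:ℂ)/2)
      rwa [← hLp_def, hexp_half_p] at this
    have hhalf_m : Tendsto (fun z : ℂ => z ^ ((1:ℂ)/2))
        (nhdsWithin (lam : ℂ) {z : ℂ | z.im < 0}) (nhds (-((s : ℂ) * Complex.I))) := by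
      have := cpow_tendsto_lower lam hl0 ((1:ℂ)/2)
      rwa [← hLm_def, hexp_half_m] at this
    have hcval_p : (1 + Complex.exp (-(Real.pi / 2 : ℝ) * Complex.I) * ((s : ℂ) * Complex.I))
        / ((t : ℝ) : ℂ) = ((a : ℝ) : ℂ) := by
      rw [hexp_neg, ha_def]
      push_cast
      rw [div_eq_div_iff htne htne]
      ring_nf
      try simp [Complex.I_sq]
      try ring
    have hcval_m : (1 + Complex.exp (-(Real.pi / 2 : ℝ) * Complex.I) * (-((s : ℂ) * Complex.I)))
        / ((t : ℝ) : ℂ) = ((b : ℝ) : ℂ) := by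
      rw [hexp_neg, hb_def]
      push_cast
      rw [div_eq_div_iff htne htne]
      ring_nf
      try simp [Complex.I_sq]
      try ring
    have hcp : Tendsto c (nhdsWithin (lam : ℂ) {z : ℂ | 0 < z.im}) (nhds ((a : ℝ) : ℂ)) := by
      rw [show c = fun z => (1 + Complex.exp (-(Real.pi / 2 : ℝ) * Complex.I) * z ^ ((1:ℂ)/2))
          / (z + 1) ^ ((1:ℂ)/2) from funext hc, ← hcval_p]
      exact (tendsto_const_nhds.add (tendsto_const_nhds.mul hhalf_p)).div
        (hden.mono_left nhdsWithin_le_nhds) (by rw [hval] at *; exact htne)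
    have hcm : Tendsto c (nhdsWithin (lam : ℂ) {z : ℂ | z.im < 0}) (nhds ((b : ℝ) : ℂ)) := by
      rw [show c = fun z => (1 + Complex.exp (-(Real.pi / 2 : ℝ) * Complex.I) * z ^ ((1:ℂ)/2))
          / (z + 1) ^ ((1:ℂ)/2) from funext hc, ← hcval_m]
      exact (tendsto_const_nhds.add (tendsto_const_nhds.mul hhalf_m)).div
        (hden.mono_left nhdsWithin_le_nhds) (by rw [hval] at *; exact htne)
    have haslit : ((a : ℝ) : ℂ) ∈ Complex.slitPlane := by
      rw [Complex.mem_slitPlane_iff]; left; simpa using ha0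
    have hbslit : ((b : ℝ) : ℂ) ∈ Complex.slitPlane := by
      rw [Complex.mem_slitPlane_iff]; left; simpa using hb0
    have hC1p : Tendsto (fun z : ℂ => c z ^ (-w)) (nhdsWithin (lam : ℂ) {z : ℂ | 0 < z.im})
        (nhds (((a : ℝ) : ℂ) ^ (-w))) :=
      ((continuousAt_cpow_const haslit).tendsto).comp hcp
    have hC2p : Tendsto (fun z : ℂ => c z ^ w) (nhdsWithin (lam : ℂ) {z : ℂ | 0 < z.im})
        (nhds (((a : ℝ) : ℂ) ^ w)) :=
      ((continuousAt_cpow_const haslit).tendsto).comp hcp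
    have hC1m : Tendsto (fun z : ℂ => c z ^ (-w)) (nhdsWithin (lam : ℂ) {z : ℂ | z.im < 0})
        (nhds (((b : ℝ) : ℂ) ^ (-w))) :=
      ((continuousAt_cpow_const hbslit).tendsto).comp hcm
    have hC2m : Tendsto (fun z : ℂ => c z ^ w) (nhdsWithin (lam : ℂ) {z : ℂ | z.im < 0})
        (nhds (((b : ℝ) : ℂ) ^ w)) :=
      ((continuousAt_cpow_const hbslit).tendsto).comp hcm
    have hd1p : Tendsto (fun z : ℂ => z ^ (-(1:ℂ)/4))
        (nhdsWithin (lam : ℂ) {z : ℂ | 0 < z.im}) (nhds e1) := by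
      have := cpow_tendsto_upper lam hl0 (-(1:ℂ)/4)
      rwa [← hLp_def, ← he1_def] at this
    have hd2p : Tendsto (fun z : ℂ => z ^ ((1:ℂ)/4))
        (nhdsWithin (lam : ℂ) {z : ℂ | 0 < z.im}) (nhds e2) := by
      have := cpow_tendsto_upper lam hl0 ((1:ℂ)/4)
      rwa [← hLp_def, ← he2_def] at this
    have hd1m : Tendsto (fun z : ℂ => z ^ (-(1:ℂ)/4))
        (nhdsWithin (lam : ℂ) {z : ℂ | z.im < 0}) (nhds f1) := by
      have := cpow_tendsto_lower lam hl0 (-(1:ℂ)/4)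
      rwa [← hLm_def, ← hf1_def] at this
    have hd2m : Tendsto (fun z : ℂ => z ^ ((1:ℂ)/4))
        (nhdsWithin (lam : ℂ) {z : ℂ | z.im < 0}) (nhds f2) := by
      have := cpow_tendsto_lower lam hl0 ((1:ℂ)/4)
      rwa [← hLm_def, ← hf2_def] at this
    -- M as explicit matrix of scalar functions
    subst hB
    have hM' : ∀ z : ℂ, M z = ((Real.sqrt 2 : ℝ) : ℂ)⁻¹ •
        !![z ^ (-(1:ℂ)/4) * c z ^ (-w), Complex.I * (z ^ (-(1:ℂ)/4) * c z ^ w);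
           Complex.I * (z ^ ((1:ℂ)/4) * c z ^ (-w)), z ^ ((1:ℂ)/4) * c z ^ w] := by
      intro z
      rw [hM z, show -Complex.I * ((Real.sqrt 2 : ℝ) : ℂ) * ((γ : ℝ) : ℂ) = -w by
        rw [hw_def]; ring, hw_def]
      ext i j
      fin_cases i <;> fin_cases j <;>
        simp [Matrix.mul_apply, Fin.sum_univ_two, Matrix.smul_apply] <;> ring
    refine ⟨((Real.sqrt 2 : ℝ) : ℂ)⁻¹ •
        !![e1 * ((a : ℝ) : ℂ) ^ (-w), Complex.I * (e1 * ((a : ℝ) : ℂ) ^ w);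
           Complex.I * (e2 * ((a : ℝ) : ℂ) ^ (-w)), e2 * ((a : ℝ) : ℂ) ^ w],
      ((Real.sqrt 2 : ℝ) : ℂ)⁻¹ •
        !![f1 * ((b : ℝ) : ℂ) ^ (-w), Complex.I * (f1 * ((b : ℝ) : ℂ) ^ w);
           Complex.I * (f2 * ((b : ℝ) : ℂ) ^ (-w)), f2 * ((b : ℝ) : ℂ) ^ w], ?_, ?_, ?_⟩
    · rw [show M = _ from funext hM']
      exact (tendsto_matrix_fin_two (hd1p.mul hC1p) ((tendsto_const_nhds).mul (hd1p.mul hC2p))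
        ((tendsto_const_nhds).mul (hd2p.mul hC1p)) (hd2p.mul hC2p)).const_smul _
    · rw [show M = _ from funext hM']
      exact (tendsto_matrix_fin_two (hd1m.mul hC1m) ((tendsto_const_nhds).mul (hd1m.mul hC2m))
        ((tendsto_const_nhds).mul (hd2m.mul hC1m)) (hd2m.mul hC2m)).const_smul _
    · -- the jump relation
      have hab1 : ((a : ℝ) : ℂ) ^ w * ((b : ℝ) : ℂ) ^ w = 1 := by
        rw [← Complex.mul_cpow_ofReal_nonneg ha0.le hb0.le,
          show ((a : ℝ) : ℂ) * ((b : ℝ) : ℂ) = ((a * b : ℝ) : ℂ) by push_cast; ring, hab]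
        simp
      have hA1 : ((a : ℝ) : ℂ) ^ (-w) = ((b : ℝ) : ℂ) ^ w := by
        rw [Complex.cpow_neg]
        exact inv_eq_of_mul_eq_one_right hab1
      have hA2 : ((a : ℝ) : ℂ) ^ w = ((b : ℝ) : ℂ) ^ (-w) := by
        rw [Complex.cpow_neg]
        exact eq_inv_of_mul_eq_one_left hab1
      have he1f : e1 = -Complex.I * f1 := by
        rw [he1_def, hf1_def, show Lp * (-(1:ℂ)/4) = Lm * (-(1:ℂ)/4) +
            (-(Real.pi / 2 : ℝ) * Complex.I) by rw [hLp_def, hLm_def]; push_cast; ring,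
          Complex.exp_add, hexp_neg]
        ring
      have he2f : e2 = Complex.I * f2 := by
        rw [he2_def, hf2_def, show Lp * ((1:ℂ)/4) = Lm * ((1:ℂ)/4) +
            ((Real.pi / 2 : ℝ) * Complex.I) by rw [hLp_def, hLm_def]; push_cast; ring,
          Complex.exp_add, hexp_pos]
        ring
      ext i j
      fin_cases i <;> fin_cases j <;>
        simp [Matrix.mul_apply, Fin.sum_univ_two, Matrix.smul_apply, he1f, he2f, hA1, hA2,
          Complex.I_sq] <;>
        ring_nf <;> (try simp [Complex.I_sq]) <;> (try ring_nf)
end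

section
/- Let g : [1-ε, 1) → ℝ be continuously differentiable with g'(η) = (√2 N)/(2π(1-η)^{1/2})·(1 + O(1/(N(1-η)^{1/2}))) uniformly on [1-ε, 1 - N^{-2} log log N]. Then for x in this range, ∫_{1-ε}^x e^{2πi g(η)}/(1-η²) dη = O(N^{-1}(1-x)^{-1/2}) + O(1) = O(1) as N → ∞, uniformly in x. -/
private lemma osc_aux_phi_deriv (c s t : ℝ) (hs : 0 < s) (ht : t = 1 - s * s) (hc : 0 < c)
    (hpt : 0 < 1 + t) :
    c⁻¹ * (-(1 / (2 * s) * -1 * (1 + t) + s * 1) / (s * (1 + t)) ^ 2)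
      = (3 * t - 1) / (2 * c * ((1 - t) * s) * (1 + t) ^ 2) := by
  have hpt' : (1 + t) ≠ 0 := hpt.ne'
  subst ht
  have hpt'' : (2 - s * s) ≠ 0 := by intro h; apply hpt'; linarith
  field_simp
  ring

private lemma osc_aux_phiA (s t d : ℝ) (hs : 0 < s) (ht : t = 1 - s * s) (hd : 0 < d)
    (hpt : 0 < 1 + t) :
    2 * Real.pi * (d⁻¹ * (s * (1 + t))⁻¹) * (d / (2 * Real.pi * s)) = ((1 - t) * (1 + t))⁻¹ := by
  have hpt' : (1 + t) ≠ 0 := hpt.ne'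
  subst ht
  have hpt'' : (2 - s * s) ≠ 0 := by intro h; apply hpt'; linarith
  have hpi : Real.pi ≠ 0 := Real.pi_ne_zero
  field_simp
  ring

private lemma osc_aux_G (s t : ℝ) (hs : 0 < s) (ht : t = 1 - s * s) :
    2 * (-(1 / (2 * s) * -1) / s ^ 2) = ((1 - t) * s)⁻¹ := by
  subst ht
  field_simp
  ring

private lemma osc_aux_frac (Cv Nv u s : ℝ) (hN : Nv ≠ 0) (hu : u ≠ 0) (hs : s ≠ 0) :
    u⁻¹ * (Cv / (Nv * s)) = Cv / Nv * (u * s)⁻¹ := by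
  field_simp

private lemma osc_aux_frac2 (Nv y : ℝ) (hN : Nv ≠ 0) (hy : y ≠ 0) :
    2 / (2 * (Nv * y)) = 1 / Nv * y⁻¹ := by
  field_simp

private lemma osc_aux_frac3 (a Nv s : ℝ) (hN : Nv ≠ 0) (hs : s ≠ 0) :
    a / Nv * (2 * s⁻¹) = 2 * a / (Nv * s) := by
  field_simp

set_option maxHeartbeats 1000000 in
/-- The oscillatory integral bound from the edge analysis: if
`g_N'(η) = (√2 N)/(2π(1-η)^{1/2})·(1 + O(1/(N(1-η)^{1/2})))` uniformly on
`[1-ε, 1 - N^{-2} log log N]`, then `∫_{1-ε}^x e^{2πi g_N(η)}/(1-η²) dη = O(1)`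
uniformly for `x` in this range. -/
theorem oscillatory_integral_bound (ε : ℝ) (hε : 0 < ε) (hε1 : ε < 1)
    (g : ℕ → ℝ → ℝ) (hgdiff : ∀ N, ContDiff ℝ 1 (g N))
    (C : ℝ) (hC : 0 < C)
    (hderiv : ∀ N : ℕ, 2 ≤ N →
      ∀ η ∈ Set.Icc (1 - ε) (1 - Real.log (Real.log N) / (N : ℝ) ^ 2),
        |deriv (g N) η - Real.sqrt 2 * N / (2 * Real.pi * Real.sqrt (1 - η))|
          ≤ (Real.sqrt 2 * N / (2 * Real.pi * Real.sqrt (1 - η))) *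
              (C / (N * Real.sqrt (1 - η)))) :
    ∃ C' > (0 : ℝ), ∃ N₀ : ℕ, ∀ N : ℕ, N₀ ≤ N →
      ∀ x ∈ Set.Icc (1 - ε) (1 - Real.log (Real.log N) / (N : ℝ) ^ 2),
        ‖∫ η in (1 - ε)..x,
            Complex.exp (2 * Real.pi * Complex.I * (g N η : ℝ)) / ((1 : ℂ) - (η : ℝ) ^ 2)‖
          ≤ C' := by
  refine ⟨2 * C + 4, by linarith, 16, ?_⟩
  intro N hN x hx
  -- basic numeric facts
  have hN16 : (16 : ℝ) ≤ N := by exact_mod_cast hN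
  have hNpos : (0 : ℝ) < N := by linarith
  have hN2 : 2 ≤ N := le_trans (by norm_num : (2:ℕ) ≤ 16) hN
  have hs2 : 0 < Real.sqrt 2 := Real.sqrt_pos.2 (by norm_num)
  have hs21 : 1 ≤ Real.sqrt 2 := Real.one_le_sqrt.2 one_le_two
  have hlog16 : Real.log 16 = 4 * Real.log 2 := by
    rw [show (16 : ℝ) = 2 ^ 4 by norm_num, Real.log_pow]; push_cast; ring
  have hlogN : Real.exp 1 ≤ Real.log N := by
    have h1 : Real.log 16 ≤ Real.log N := Real.log_le_log (by norm_num) hN16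
    nlinarith [Real.exp_one_lt_d9, Real.log_two_gt_d9]
  have hlogNpos : 0 < Real.log N := lt_of_lt_of_le (Real.exp_pos 1) hlogN
  have hll : 1 ≤ Real.log (Real.log N) := (Real.le_log_iff_exp_le hlogNpos).2 hlogN
  have hspos : 0 < Real.log (Real.log N) / (N : ℝ) ^ 2 :=
    div_pos (by linarith) (by positivity)
  obtain ⟨hx1, hx2⟩ := hx
  have hεx : 1 - ε ≤ x := hx1
  have hxlt : x < 1 := by linarith
  have hdx : 0 < 1 - x := by linarith
  have hsqx : 0 < Real.sqrt (1 - x) := Real.sqrt_pos.2 hdx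
  have hNsx : 1 ≤ (N : ℝ) * Real.sqrt (1 - x) := by
    have h3 : (N : ℝ) ^ 2 * (Real.log (Real.log N) / (N : ℝ) ^ 2) = Real.log (Real.log N) := by
      field_simp
    have h2 : (N : ℝ) * Real.sqrt (Real.log (Real.log N) / (N : ℝ) ^ 2)
        = Real.sqrt (Real.log (Real.log N)) := by
      conv_rhs => rw [← h3, Real.sqrt_mul (sq_nonneg (N : ℝ)), Real.sqrt_sq hNpos.le]
    have h4 : 1 ≤ Real.sqrt (Real.log (Real.log N)) := Real.one_le_sqrt.2 hll
    have h1 : Real.sqrt (Real.log (Real.log N) / (N : ℝ) ^ 2) ≤ Real.sqrt (1 - x) :=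
      Real.sqrt_le_sqrt (by linarith)
    nlinarith [Real.sqrt_nonneg (Real.log (Real.log N) / (N : ℝ) ^ 2)]
  -- point facts on the interval
  have hfacts : ∀ t ∈ Set.Icc (1 - ε) x,
      0 < 1 - t ∧ 0 < 1 + t ∧ 0 < Real.sqrt (1 - t) ∧ 0 < t := by
    intro t ht
    have h1 : 0 < 1 - t := by have := ht.2; linarith
    exact ⟨h1, by have := ht.1; linarith, Real.sqrt_pos.2 h1, by have := ht.1; linarith⟩
  -- named functions
  obtain ⟨E, hE_def⟩ : ∃ E : ℝ → ℂ,
      E = fun t => Complex.exp (2 * Real.pi * Complex.I * (g N t : ℝ)) := ⟨_, rfl⟩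
  obtain ⟨φ, hφ_def⟩ : ∃ φ : ℝ → ℝ,
      φ = fun t => (Real.sqrt 2 * (N : ℝ))⁻¹ * (Real.sqrt (1 - t) * (1 + t))⁻¹ := ⟨_, rfl⟩
  obtain ⟨φ', hφ'_def⟩ : ∃ φ' : ℝ → ℝ,
      φ' = fun t => (3 * t - 1) /
        (2 * (Real.sqrt 2 * (N : ℝ)) * ((1 - t) * Real.sqrt (1 - t)) * (1 + t) ^ 2) := ⟨_, rfl⟩
  obtain ⟨F, hF_def⟩ : ∃ F : ℝ → ℂ,
      F = fun t => E t * (-Complex.I * (φ t : ℝ)) := ⟨_, rfl⟩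
  obtain ⟨F', hF'_def⟩ : ∃ F' : ℝ → ℂ,
      F' = fun t => E t * (2 * (Real.pi : ℂ) * Complex.I * ((deriv (g N) t : ℝ) : ℂ)) *
          (-Complex.I * (φ t : ℝ)) + E t * (-Complex.I * (φ' t : ℝ)) := ⟨_, rfl⟩
  -- norm of E is 1
  have hEnorm : ∀ t : ℝ, ‖E t‖ = 1 := by
    intro t
    rw [hE_def]
    have h : Complex.exp (2 * Real.pi * Complex.I * ((g N t : ℝ) : ℂ))
        = Complex.exp (((2 * Real.pi * g N t : ℝ) : ℂ) * Complex.I) := by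
      congr 1; push_cast; ring
    simp only [h, Complex.norm_exp_ofReal_mul_I]
  -- derivative of E
  have hEd : ∀ t : ℝ, HasDerivAt E
      (E t * (2 * (Real.pi : ℂ) * Complex.I * ((deriv (g N) t : ℝ) : ℂ))) t := by
    intro t
    simp only [hE_def]
    exact ((((hgdiff N).differentiable one_ne_zero t).hasDerivAt).ofReal_comp.const_mul
      (2 * (Real.pi : ℂ) * Complex.I)).cexp
  -- derivative of φ
  have hφd : ∀ t ∈ Set.Icc (1 - ε) x, HasDerivAt φ (φ' t) t := by
    intro t ht
    obtain ⟨h1t, hpt, hst, h0t⟩ := hfacts t ht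
    have hts : t = 1 - Real.sqrt (1 - t) * Real.sqrt (1 - t) := by
      rw [Real.mul_self_sqrt h1t.le]; ring
    have h1 : HasDerivAt (fun y : ℝ => 1 - y) (-1) t := (hasDerivAt_id t).const_sub 1
    have h2 : HasDerivAt (fun y : ℝ => Real.sqrt (1 - y))
        (1 / (2 * Real.sqrt (1 - t)) * -1) t := (Real.hasDerivAt_sqrt h1t.ne').comp t h1
    have h3 : HasDerivAt (fun y : ℝ => 1 + y) 1 t := (hasDerivAt_id t).const_add 1
    have h4 : HasDerivAt (fun y : ℝ => Real.sqrt (1 - y) * (1 + y))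
        (1 / (2 * Real.sqrt (1 - t)) * -1 * (1 + t) + Real.sqrt (1 - t) * 1) t := h2.mul h3
    have h5 : Real.sqrt (1 - t) * (1 + t) ≠ 0 := (mul_pos hst hpt).ne'
    have h6 := (h4.inv h5).const_mul ((Real.sqrt 2 * (N : ℝ))⁻¹)
    simp only [hφ_def, hφ'_def]
    refine h6.congr_deriv (Eq.symm ?_)
    exact (osc_aux_phi_deriv (Real.sqrt 2 * (N : ℝ)) (Real.sqrt (1 - t)) t hst hts
      (mul_pos hs2 hNpos) hpt).symm
  -- derivative of F
  have hFd : ∀ t ∈ Set.Icc (1 - ε) x, HasDerivAt F (F' t) t := by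
    intro t ht
    have h := (hEd t).mul (((hφd t ht).ofReal_comp).const_mul (-Complex.I))
    simp only [hF_def, hF'_def]
    exact h
  -- continuity facts
  have hsqrtc : Continuous fun t : ℝ => Real.sqrt (1 - t) :=
    Real.continuous_sqrt.comp (continuous_const.sub continuous_id)
  have hEc : Continuous E := by
    rw [hE_def]
    exact Complex.continuous_exp.comp
      (continuous_const.mul (Complex.continuous_ofReal.comp (hgdiff N).continuous))
  have hg'c : Continuous (deriv (g N)) := (hgdiff N).continuous_deriv le_rfl
  have hIccS : Set.uIcc (1 - ε) x = Set.Icc (1 - ε) x := Set.uIcc_of_le hεx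
  have hφc : ContinuousOn φ (Set.Icc (1 - ε) x) := by
    rw [hφ_def]
    exact continuousOn_const.mul (ContinuousOn.inv₀
      ((hsqrtc.mul (continuous_const.add continuous_id)).continuousOn)
      (fun t ht => (mul_pos (hfacts t ht).2.2.1 (hfacts t ht).2.1).ne'))
  have hφ'c : ContinuousOn φ' (Set.Icc (1 - ε) x) := by
    rw [hφ'_def]
    apply ContinuousOn.div
    · fun_prop
    · exact ((continuous_const.mul (((continuous_const.sub continuous_id).mul
        hsqrtc))).mul ((continuous_const.add continuous_id).pow 2)).continuousOn
    · intro t ht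
      obtain ⟨h1t, hpt, hst, h0t⟩ := hfacts t ht
      exact (mul_pos (mul_pos (mul_pos two_pos (mul_pos hs2 hNpos)) (mul_pos h1t hst))
        (pow_pos hpt 2)).ne'
  have hInt_eh : IntervalIntegrable (fun t => E t / ((1 : ℂ) - (t : ℝ) ^ 2))
      MeasureTheory.volume (1 - ε) x := by
    apply ContinuousOn.intervalIntegrable
    rw [hIccS]
    apply hEc.continuousOn.div
    · fun_prop
    · intro t ht
      have h : ((1 : ℂ) - (t : ℝ) ^ 2) = ((1 - t ^ 2 : ℝ) : ℂ) := by push_cast; ring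
      rw [h]
      exact Complex.ofReal_ne_zero.2
        (by nlinarith [(hfacts t ht).1, (hfacts t ht).2.1])
  have hIntF' : IntervalIntegrable F' MeasureTheory.volume (1 - ε) x := by
    apply ContinuousOn.intervalIntegrable
    rw [hIccS, hF'_def]
    apply ContinuousOn.add
    · exact ((hEc.continuousOn.mul ((continuous_const.mul
        (Complex.continuous_ofReal.comp hg'c)).continuousOn)).mul
        (continuousOn_const.mul (Complex.continuous_ofReal.comp_continuousOn hφc)))
    · exact hEc.continuousOn.mul
        (continuousOn_const.mul (Complex.continuous_ofReal.comp_continuousOn hφ'c))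
  -- FTC for F
  have hFTC : (∫ t in (1 - ε)..x, F' t) = F x - F (1 - ε) :=
    intervalIntegral.integral_eq_sub_of_hasDerivAt
      (fun t ht => hFd t (hIccS ▸ ht)) hIntF'
  -- pointwise bound on the remainder
  have hRptw : ∀ t ∈ Set.Icc (1 - ε) x,
      ‖E t / ((1 : ℂ) - (t : ℝ) ^ 2) - F' t‖
        ≤ (C + 1) / (N : ℝ) * ((1 - t) * Real.sqrt (1 - t))⁻¹ := by
    intro t ht
    obtain ⟨h1t, hpt, hst, h0t⟩ := hfacts t ht
    have hts : t = 1 - Real.sqrt (1 - t) * Real.sqrt (1 - t) := by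
      rw [Real.mul_self_sqrt h1t.le]; ring
    have hder := hderiv N hN2 t ⟨ht.1, le_trans ht.2 hx2⟩
    have hid : 2 * Real.pi * (φ t) * (Real.sqrt 2 * (N : ℝ) / (2 * Real.pi * Real.sqrt (1 - t)))
        = ((1 - t) * (1 + t))⁻¹ := by
      rw [hφ_def]
      exact osc_aux_phiA (Real.sqrt (1 - t)) t (Real.sqrt 2 * (N : ℝ)) hst hts
        (mul_pos hs2 hNpos) hpt
    have hφpos : 0 < φ t := by
      rw [hφ_def]
      exact mul_pos (inv_pos.2 (mul_pos hs2 hNpos)) (inv_pos.2 (mul_pos hst hpt))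
    -- key complex identity
    have e3 : E t / ((1 : ℂ) - (t : ℝ) ^ 2) - F' t
        = E t * ((((1 - t ^ 2)⁻¹ - 2 * Real.pi * deriv (g N) t * φ t : ℝ) : ℂ)
            + Complex.I * ((φ' t : ℝ) : ℂ)) := by
      rw [hF'_def]
      push_cast
      linear_combination (E t * (2 * (Real.pi : ℂ)) * ((deriv (g N) t : ℝ) : ℂ)
        * ((φ t : ℝ) : ℂ)) * Complex.I_mul_I
    have hnorm : ‖E t / ((1 : ℂ) - (t : ℝ) ^ 2) - F' t‖
        ≤ |(1 - t ^ 2)⁻¹ - 2 * Real.pi * deriv (g N) t * φ t| + |φ' t| := by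
      rw [e3, norm_mul, hEnorm t, one_mul]
      refine le_trans (norm_add_le _ _) ?_
      rw [Complex.norm_real, norm_mul, Complex.norm_I, one_mul, Complex.norm_real]
      simp [Real.norm_eq_abs]
    -- bound on |r|
    have hrb : |(1 - t ^ 2)⁻¹ - 2 * Real.pi * deriv (g N) t * φ t|
        ≤ C / (N : ℝ) * ((1 - t) * Real.sqrt (1 - t))⁻¹ := by
      have hrw : ((1 : ℝ) - t ^ 2)⁻¹ - 2 * Real.pi * deriv (g N) t * φ t
          = 2 * Real.pi * φ t *
            (Real.sqrt 2 * (N : ℝ) / (2 * Real.pi * Real.sqrt (1 - t)) - deriv (g N) t) := by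
        rw [show ((1 : ℝ) - t ^ 2) = (1 - t) * (1 + t) by ring, ← hid]; ring
      rw [hrw, abs_mul, abs_of_pos (by positivity : (0:ℝ) < 2 * Real.pi * φ t), abs_sub_comm]
      calc 2 * Real.pi * φ t * |deriv (g N) t
            - Real.sqrt 2 * (N : ℝ) / (2 * Real.pi * Real.sqrt (1 - t))|
          ≤ 2 * Real.pi * φ t *
            ((Real.sqrt 2 * (N : ℝ) / (2 * Real.pi * Real.sqrt (1 - t))) *
              (C / ((N : ℝ) * Real.sqrt (1 - t)))) := by
            exact mul_le_mul_of_nonneg_left hder (by positivity)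
        _ = (2 * Real.pi * φ t * (Real.sqrt 2 * (N : ℝ) / (2 * Real.pi * Real.sqrt (1 - t)))) *
              (C / ((N : ℝ) * Real.sqrt (1 - t))) := by ring
        _ = ((1 - t) * (1 + t))⁻¹ * (C / ((N : ℝ) * Real.sqrt (1 - t))) := by rw [hid]
        _ ≤ (1 - t)⁻¹ * (C / ((N : ℝ) * Real.sqrt (1 - t))) := by
            refine mul_le_mul_of_nonneg_right ?_ (by positivity)
            exact inv_anti₀ h1t (by nlinarith)
        _ = C / (N : ℝ) * ((1 - t) * Real.sqrt (1 - t))⁻¹ :=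
            osc_aux_frac C (N : ℝ) (1 - t) (Real.sqrt (1 - t)) hNpos.ne' h1t.ne' hst.ne'
    -- bound on |φ' t|
    have hb2 : |φ' t| ≤ 1 / (N : ℝ) * ((1 - t) * Real.sqrt (1 - t))⁻¹ := by
      rw [hφ'_def]
      simp only []
      rw [abs_div]
      have hd1 : |3 * t - 1| ≤ 2 := by
        rw [abs_le]; constructor <;> nlinarith [ht.2, hxlt]
      have hdenpos : 0 < 2 * (Real.sqrt 2 * (N : ℝ)) * ((1 - t) * Real.sqrt (1 - t))
          * (1 + t) ^ 2 :=
        mul_pos (mul_pos (mul_pos two_pos (mul_pos hs2 hNpos)) (mul_pos h1t hst))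
          (pow_pos hpt 2)
      rw [abs_of_pos hdenpos]
      have hpt2 : 1 ≤ (1 + t) ^ 2 := by nlinarith
      have hy : 0 < (1 - t) * Real.sqrt (1 - t) := mul_pos h1t hst
      have hδ : 2 * ((N : ℝ) * ((1 - t) * Real.sqrt (1 - t)))
          ≤ 2 * (Real.sqrt 2 * (N : ℝ)) * ((1 - t) * Real.sqrt (1 - t)) * (1 + t) ^ 2 := by
        nlinarith [mul_pos hNpos hy, mul_le_mul_of_nonneg_left hs21 (mul_pos hNpos hy).le]
      calc |3 * t - 1| / (2 * (Real.sqrt 2 * (N : ℝ)) * ((1 - t) * Real.sqrt (1 - t))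
            * (1 + t) ^ 2)
          ≤ 2 / (2 * ((N : ℝ) * ((1 - t) * Real.sqrt (1 - t)))) :=
            div_le_div₀ (by norm_num) hd1 (by positivity) hδ
        _ = 1 / (N : ℝ) * ((1 - t) * Real.sqrt (1 - t))⁻¹ :=
            osc_aux_frac2 (N : ℝ) ((1 - t) * Real.sqrt (1 - t)) hNpos.ne' hy.ne'
    calc ‖E t / ((1 : ℂ) - (t : ℝ) ^ 2) - F' t‖
        ≤ |(1 - t ^ 2)⁻¹ - 2 * Real.pi * deriv (g N) t * φ t| + |φ' t| := hnorm
      _ ≤ C / (N : ℝ) * ((1 - t) * Real.sqrt (1 - t))⁻¹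
          + 1 / (N : ℝ) * ((1 - t) * Real.sqrt (1 - t))⁻¹ := add_le_add hrb hb2
      _ = (C + 1) / (N : ℝ) * ((1 - t) * Real.sqrt (1 - t))⁻¹ := by ring
  -- integral of the bound function
  have hBC : ContinuousOn (fun t : ℝ => ((1 - t) * Real.sqrt (1 - t))⁻¹)
      (Set.Icc (1 - ε) x) :=
    ContinuousOn.inv₀ (((continuous_const.sub continuous_id).mul hsqrtc).continuousOn)
      (fun t ht => (mul_pos (hfacts t ht).1 (hfacts t ht).2.2.1).ne')
  have hBint : IntervalIntegrable (fun t : ℝ => ((1 - t) * Real.sqrt (1 - t))⁻¹)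
      MeasureTheory.volume (1 - ε) x := by
    apply ContinuousOn.intervalIntegrable
    rw [hIccS]; exact hBC
  have hGd : ∀ t ∈ Set.uIcc (1 - ε) x,
      HasDerivAt (fun y : ℝ => 2 * (Real.sqrt (1 - y))⁻¹)
        (((1 - t) * Real.sqrt (1 - t))⁻¹) t := by
    intro t ht'
    have ht := hIccS ▸ ht'
    obtain ⟨h1t, hpt, hst, h0t⟩ := hfacts t ht
    have hts : t = 1 - Real.sqrt (1 - t) * Real.sqrt (1 - t) := by
      rw [Real.mul_self_sqrt h1t.le]; ring
    have h1 : HasDerivAt (fun y : ℝ => 1 - y) (-1) t := (hasDerivAt_id t).const_sub 1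
    have h2 : HasDerivAt (fun y : ℝ => Real.sqrt (1 - y))
        (1 / (2 * Real.sqrt (1 - t)) * -1) t := (Real.hasDerivAt_sqrt h1t.ne').comp t h1
    have h3 := (h2.inv hst.ne').const_mul (2 : ℝ)
    refine h3.congr_deriv (Eq.symm ?_)
    exact (osc_aux_G (Real.sqrt (1 - t)) t hst hts).symm
  have hBval : (∫ t in (1 - ε)..x, ((1 - t) * Real.sqrt (1 - t))⁻¹)
      = 2 * (Real.sqrt (1 - x))⁻¹ - 2 * (Real.sqrt (1 - (1 - ε)))⁻¹ :=
    intervalIntegral.integral_eq_sub_of_hasDerivAt hGd hBint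
  -- bound on the remainder integral
  have hmainint : ‖∫ t in (1 - ε)..x, (E t / ((1 : ℂ) - (t : ℝ) ^ 2) - F' t)‖
      ≤ 2 * (C + 1) := by
    have hb : IntervalIntegrable
        (fun t : ℝ => (C + 1) / (N : ℝ) * ((1 - t) * Real.sqrt (1 - t))⁻¹)
        MeasureTheory.volume (1 - ε) x := hBint.const_mul _
    have hae : ∀ᵐ t ∂(MeasureTheory.volume.restrict (Set.uIoc (1 - ε) x)),
        ‖E t / ((1 : ℂ) - (t : ℝ) ^ 2) - F' t‖
          ≤ (C + 1) / (N : ℝ) * ((1 - t) * Real.sqrt (1 - t))⁻¹ := by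
      refine (MeasureTheory.ae_restrict_mem measurableSet_uIoc).mono (fun t ht => ?_)
      rw [Set.uIoc_of_le hεx] at ht
      exact hRptw t ⟨le_of_lt ht.1, ht.2⟩
    refine le_trans (intervalIntegral.norm_integral_le_abs_of_norm_le hae hb) ?_
    rw [intervalIntegral.integral_const_mul, hBval,
      show (1 : ℝ) - (1 - ε) = ε by ring]
    have hsε : 0 < Real.sqrt ε := Real.sqrt_pos.2 hε
    have hmono : Real.sqrt (1 - x) ≤ Real.sqrt ε := Real.sqrt_le_sqrt (by linarith)
    have hinv : (Real.sqrt ε)⁻¹ ≤ (Real.sqrt (1 - x))⁻¹ := inv_anti₀ hsqx hmono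
    have hnn : 0 ≤ 2 * (Real.sqrt (1 - x))⁻¹ - 2 * (Real.sqrt ε)⁻¹ := by linarith
    rw [abs_of_nonneg (mul_nonneg (by positivity) hnn)]
    have h5 : (C + 1) / (N : ℝ) * (2 * (Real.sqrt (1 - x))⁻¹ - 2 * (Real.sqrt ε)⁻¹)
        ≤ (C + 1) / (N : ℝ) * (2 * (Real.sqrt (1 - x))⁻¹) :=
      mul_le_mul_of_nonneg_left (sub_le_self _ (by positivity)) (by positivity)
    refine le_trans h5 ?_
    have hkey : (C + 1) / (N : ℝ) * (2 * (Real.sqrt (1 - x))⁻¹)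
        = 2 * (C + 1) / ((N : ℝ) * Real.sqrt (1 - x)) :=
      osc_aux_frac3 (C + 1) (N : ℝ) (Real.sqrt (1 - x)) hNpos.ne' hsqx.ne'
    rw [hkey]
    exact div_le_self (by linarith) hNsx
  -- endpoint bounds
  have hFb : ∀ t ∈ Set.Icc (1 - ε) x, ‖F t‖ ≤ 1 := by
    intro t ht
    obtain ⟨h1t, hpt, hst, h0t⟩ := hfacts t ht
    have hφpos : 0 < φ t := by
      rw [hφ_def]
      exact mul_pos (inv_pos.2 (mul_pos hs2 hNpos)) (inv_pos.2 (mul_pos hst hpt))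
    have hφle : φ t ≤ 1 := by
      rw [hφ_def]
      simp only []
      rw [← mul_inv]
      apply inv_le_one_of_one_le₀
      have hmono : Real.sqrt (1 - x) ≤ Real.sqrt (1 - t) := Real.sqrt_le_sqrt (by linarith [ht.2])
      have hm1 : 1 ≤ (N : ℝ) * Real.sqrt (1 - t) :=
        le_trans hNsx (mul_le_mul_of_nonneg_left hmono hNpos.le)
      have hm2 : 1 ≤ ((N : ℝ) * Real.sqrt (1 - t)) * (1 + t) :=
        le_trans hm1 (le_mul_of_one_le_right (by positivity) (by linarith))
      nlinarith [hm2, hs21]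
    rw [hF_def]
    simp only []
    rw [norm_mul, hEnorm t, one_mul, norm_mul, norm_neg, Complex.norm_I, one_mul,
      Complex.norm_real, Real.norm_eq_abs, abs_of_pos hφpos]
    exact hφle
  -- final assembly
  have hgoalrw : (∫ η in (1 - ε)..x,
        Complex.exp (2 * Real.pi * Complex.I * (g N η : ℝ)) / ((1 : ℂ) - (η : ℝ) ^ 2))
      = ∫ t in (1 - ε)..x, E t / ((1 : ℂ) - (t : ℝ) ^ 2) := by
    simp only [hE_def]
  have hdecomp : (∫ t in (1 - ε)..x, E t / ((1 : ℂ) - (t : ℝ) ^ 2))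
      = (F x - F (1 - ε))
        + ∫ t in (1 - ε)..x, (E t / ((1 : ℂ) - (t : ℝ) ^ 2) - F' t) := by
    rw [intervalIntegral.integral_sub hInt_eh hIntF', hFTC]; ring
  rw [hgoalrw, hdecomp]
  have hFx := hFb x ⟨hεx, le_refl x⟩
  have hFε := hFb (1 - ε) ⟨le_refl _, hεx⟩
  calc ‖(F x - F (1 - ε))
        + ∫ t in (1 - ε)..x, (E t / ((1 : ℂ) - (t : ℝ) ^ 2) - F' t)‖
      ≤ ‖F x - F (1 - ε)‖
        + ‖∫ t in (1 - ε)..x, (E t / ((1 : ℂ) - (t : ℝ) ^ 2) - F' t)‖ := norm_add_le _ _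
    _ ≤ (‖F x‖ + ‖F (1 - ε)‖)
        + ‖∫ t in (1 - ε)..x, (E t / ((1 : ℂ) - (t : ℝ) ^ 2) - F' t)‖ := by
        gcongr; exact norm_sub_le _ _
    _ ≤ 2 * C + 4 := by linarith [hmainint, hFx, hFε]
end

section
/- Let F(x) = 1 - arccos(x)/π and κ_j = -cos((j-1/2)π/N), and suppose 1 ≤ j ≤ log N. Then for sufficiently large N, F(κ_j + (j log N)/(4N²)) - F(κ_j) ≥ C·√(j log N)/(2N) for some constant C > 0 independent of j and N. -/
set_option maxHeartbeats 1000000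

open Real Set

lemma gAnti : AntitoneOn (fun x : ℝ => Real.arccos x + Real.sqrt 2 * Real.sqrt (1 + x))
    (Set.Icc (-1 : ℝ) 1) := by
  have hconv : Convex ℝ (Set.Icc (-1 : ℝ) 1) := convex_Icc _ _
  apply antitoneOn_of_deriv_nonpos hconv
  · exact (Real.continuous_arccos.continuousOn).add
      ((continuous_const.mul ((Real.continuous_sqrt).comp (continuous_const.add continuous_id))).continuousOn)
  · intro x hx
    rw [interior_Icc] at hx
    have h1 : x ≠ -1 := ne_of_gt hx.1
    have h2 : x ≠ 1 := ne_of_lt hx.2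
    have hpos : (0:ℝ) < 1 + x := by linarith [hx.1]
    have hin : HasDerivAt (fun y : ℝ => 1 + y) 1 x := by
      simpa using (hasDerivAt_id x).const_add (1:ℝ)
    have hs : HasDerivAt (fun y : ℝ => Real.sqrt (1 + y)) (1 / (2 * Real.sqrt (1 + x)) * 1) x :=
      (Real.hasDerivAt_sqrt (ne_of_gt hpos)).comp x hin
    exact (((Real.hasDerivAt_arccos h1 h2).add (hs.const_mul (Real.sqrt 2))).differentiableAt).differentiableWithinAt
  · intro x hx
    rw [interior_Icc] at hx
    have h1 : x ≠ -1 := ne_of_gt hx.1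
    have h2 : x ≠ 1 := ne_of_lt hx.2
    have hpos : (0:ℝ) < 1 + x := by linarith [hx.1]
    have hin : HasDerivAt (fun y : ℝ => 1 + y) 1 x := by
      simpa using (hasDerivAt_id x).const_add (1:ℝ)
    have hs : HasDerivAt (fun y : ℝ => Real.sqrt (1 + y)) (1 / (2 * Real.sqrt (1 + x)) * 1) x :=
      (Real.hasDerivAt_sqrt (ne_of_gt hpos)).comp x hin
    have hg : HasDerivAt (fun y : ℝ => Real.arccos y + Real.sqrt 2 * Real.sqrt (1 + y))
        (-(1 / Real.sqrt (1 - x ^ 2)) + Real.sqrt 2 * (1 / (2 * Real.sqrt (1 + x)) * 1)) x :=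
      (Real.hasDerivAt_arccos h1 h2).add (hs.const_mul (Real.sqrt 2))
    rw [hg.deriv]
    -- show √2/(2√(1+x)) ≤ 1/√(1-x²)
    have hx2 : (0:ℝ) < 1 - x ^ 2 := by nlinarith [hx.1, hx.2]
    have hfac : (1:ℝ) - x ^ 2 = (1 - x) * (1 + x) := by ring
    have hsplit : Real.sqrt (1 - x ^ 2) = Real.sqrt (1 - x) * Real.sqrt (1 + x) := by
      rw [hfac, Real.sqrt_mul (by linarith [hx.2])]
    have hle : Real.sqrt (1 - x) ≤ Real.sqrt 2 := Real.sqrt_le_sqrt (by linarith [hx.1])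
    have hub : Real.sqrt (1 - x ^ 2) ≤ Real.sqrt 2 * Real.sqrt (1 + x) := by
      rw [hsplit]
      exact mul_le_mul_of_nonneg_right hle (Real.sqrt_nonneg _)
    have hsx : 0 < Real.sqrt (1 - x ^ 2) := Real.sqrt_pos.mpr hx2
    have hs1x : 0 < Real.sqrt (1 + x) := Real.sqrt_pos.mpr hpos
    have hs2 : (0:ℝ) < Real.sqrt 2 := Real.sqrt_pos.mpr (by norm_num)
    have hsq2 : Real.sqrt 2 * Real.sqrt 2 = 2 := Real.mul_self_sqrt (by norm_num)
    have key : Real.sqrt 2 * (1 / (2 * Real.sqrt (1 + x))) ≤ 1 / Real.sqrt (1 - x ^ 2) := by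
      rw [mul_one_div, div_le_div_iff₀ (by positivity) hsx]
      nlinarith [mul_le_mul_of_nonneg_left hub (le_of_lt hs2)]
    nlinarith [key]

lemma sqrtDiff {s t : ℝ} (hs : 0 ≤ s) (ht : 0 < t) (h : s + t ≤ 21 * t) :
    Real.sqrt t / (2 * Real.sqrt 21) ≤ Real.sqrt (s + t) - Real.sqrt s := by
  set u := Real.sqrt (s + t)
  set v := Real.sqrt s
  set w := Real.sqrt t
  set q := Real.sqrt 21
  have hu2 : u ^ 2 = s + t := Real.sq_sqrt (by linarith)
  have hv2 : v ^ 2 = s := Real.sq_sqrt hs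
  have hw2 : w ^ 2 = t := Real.sq_sqrt ht.le
  have hq2 : q ^ 2 = 21 := Real.sq_sqrt (by norm_num)
  have hw : 0 < w := Real.sqrt_pos.mpr ht
  have hq : 0 < q := Real.sqrt_pos.mpr (by norm_num)
  have hv : 0 ≤ v := Real.sqrt_nonneg _
  have huv : v ≤ u := Real.sqrt_le_sqrt (by linarith)
  have hu_le : u ≤ q * w := by
    have : Real.sqrt (s + t) ≤ Real.sqrt (21 * t) := Real.sqrt_le_sqrt h
    rwa [Real.sqrt_mul (by norm_num) t] at this
  rw [div_le_iff₀ (by positivity)]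
  nlinarith [mul_le_mul_of_nonneg_left hu_le (sub_nonneg.mpr huv)]

/-- Very-near-edge estimate for `1 ≤ j ≤ log N`: shifting the quantile
`κ_j = -cos((j-1/2)π/N)` to the right by `(j log N)/(4N²)` increases
`F(x) = 1 - arccos(x)/π` by at least `C·√(j log N)/(2N)`. -/
theorem very_near_edge_shift_increases_F :
    ∃ C > (0 : ℝ), ∃ N₀ : ℕ, ∀ N : ℕ, N₀ ≤ N → ∀ j : ℕ,
      1 ≤ j → (j : ℝ) ≤ Real.log N →
      C * Real.sqrt ((j : ℝ) * Real.log N) / (2 * N) ≤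
        (1 - Real.arccos (-Real.cos (((j : ℝ) - 1 / 2) * Real.pi / N)
            + (j : ℝ) * Real.log N / (4 * (N : ℝ) ^ 2)) / Real.pi)
        - (1 - Real.arccos (-Real.cos (((j : ℝ) - 1 / 2) * Real.pi / N)) / Real.pi) := by
  refine ⟨1/100, by norm_num, 100, fun N hN j hj hjL => ?_⟩
  have hNpos : (0:ℝ) < N := by exact_mod_cast lt_of_lt_of_le (by norm_num) hN
  have hN100 : (100:ℝ) ≤ N := by exact_mod_cast hN
  have hj1 : (1:ℝ) ≤ (j:ℝ) := by exact_mod_cast hj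
  set L := Real.log N with hL_def
  have hL1 : (1:ℝ) ≤ L := le_trans hj1 hjL
  set θ := ((j:ℝ) - 1/2) * Real.pi / N with hθ_def
  set a := -Real.cos θ with ha_def
  set t := (j:ℝ) * L / (4 * (N:ℝ)^2) with ht_def
  have ht : 0 < t := by
    apply div_pos (mul_pos (by linarith) (by linarith)) (by positivity)
  have h4t : 4 * (N:ℝ)^2 * t = (j:ℝ) * L := by
    rw [ht_def]; field_simp
  -- L ≤ 2√N and L² ≤ 4N
  have hLs : L ≤ 2 * Real.sqrt N := by
    have h1 := Real.log_le_sub_one_of_pos (Real.sqrt_pos.mpr hNpos)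
    rw [Real.log_sqrt hNpos.le] at h1
    have : (0:ℝ) ≤ Real.sqrt N := Real.sqrt_nonneg _
    linarith
  have hL2 : L^2 ≤ 4 * N := by
    nlinarith [Real.sq_sqrt hNpos.le, Real.sqrt_nonneg (N:ℝ), hLs, hL1]
  -- t ≤ 1/100
  have htN : t * N ≤ 1 := by
    have hjL2 : (j:ℝ) * L ≤ L^2 := by nlinarith
    nlinarith [hNpos]
  have ht100 : t ≤ 1/100 := by
    nlinarith [htN, hN100, ht.le]
  -- geometric facts
  have hθN : θ * N = ((j:ℝ) - 1/2) * Real.pi := by rw [hθ_def]; field_simp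
  have hθnn : 0 ≤ θ := by
    rw [hθ_def]
    apply div_nonneg (mul_nonneg (by linarith) Real.pi_pos.le) hNpos.le
  have h1a : 1 + a ≤ θ^2/2 := by
    have := Real.one_sub_sq_div_two_le_cos (x := θ)
    rw [ha_def]; linarith
  have ha_low : -1 ≤ a := by
    have := Real.cos_le_one θ
    rw [ha_def]; linarith
  have h20 : 1 + a ≤ 20 * t := by
    have hπ : Real.pi < 3.15 := Real.pi_lt_d2
    have hπ0 : 0 < Real.pi := Real.pi_pos
    have hπ2 : Real.pi^2 ≤ 10 := by nlinarith
    have hsqj : ((j:ℝ) - 1/2)^2 ≤ (j:ℝ)^2 := by nlinarith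
    have hθ2 : (θ * N)^2 ≤ (j:ℝ)^2 * Real.pi^2 := by
      rw [hθN]
      calc (((j:ℝ) - 1/2) * Real.pi)^2 = ((j:ℝ) - 1/2)^2 * Real.pi^2 := by ring
        _ ≤ (j:ℝ)^2 * Real.pi^2 := mul_le_mul_of_nonneg_right hsqj (sq_nonneg _)
    have e1 : (1 + a) * (N:ℝ)^2 ≤ (θ * N)^2 / 2 := by
      have := mul_le_mul_of_nonneg_right h1a (sq_nonneg (N:ℝ))
      nlinarith [this]
    have e2 : (θ * N)^2 / 2 ≤ 5 * (j:ℝ)^2 := by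
      nlinarith [hθ2, mul_nonneg (sub_nonneg.mpr hπ2) (sq_nonneg (j:ℝ))]
    have e3 : 5 * (j:ℝ)^2 ≤ 5 * ((j:ℝ) * L) := by nlinarith [hjL, hj1]
    have hmul : (1 + a) * (N:ℝ)^2 ≤ 20 * t * (N:ℝ)^2 := by
      have h5 : 20 * t * (N:ℝ)^2 = 5 * ((j:ℝ) * L) := by
        rw [show 20 * t * (N:ℝ)^2 = 5 * (4 * (N:ℝ)^2 * t) by ring, h4t]
      exact le_of_le_of_eq (e1.trans (e2.trans e3)) h5.symm
    exact le_of_mul_le_mul_right (by linarith [hmul]) (pow_pos hNpos 2)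
  have hb1 : a + t ≤ 1 := by linarith
  -- apply antitonicity
  have hmem1 : a ∈ Set.Icc (-1:ℝ) 1 := ⟨ha_low, by linarith⟩
  have hmem2 : a + t ∈ Set.Icc (-1:ℝ) 1 := ⟨by linarith, hb1⟩
  have hmono := gAnti hmem1 hmem2 (by linarith)
  simp only at hmono
  have hsd := sqrtDiff (s := 1 + a) (t := t) (by linarith) ht (by linarith)
  have hrw : (1 + a) + t = 1 + (a + t) := by ring
  rw [hrw] at hsd
  have hdiff : Real.sqrt 2 * (Real.sqrt t / (2 * Real.sqrt 21)) ≤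
      Real.arccos a - Real.arccos (a + t) := by
    have := mul_le_mul_of_nonneg_left hsd (Real.sqrt_nonneg 2)
    nlinarith [this, hmono]
  -- constants
  have hs2 : (1:ℝ) ≤ Real.sqrt 2 := by
    rw [show (1:ℝ) = Real.sqrt 1 by simp]
    exact Real.sqrt_le_sqrt (by norm_num)
  have hs21 : Real.sqrt 21 ≤ 5 := by
    rw [show (5:ℝ) = Real.sqrt 25 by rw [show (25:ℝ) = 5^2 by norm_num, Real.sqrt_sq]; norm_num]
    exact Real.sqrt_le_sqrt (by norm_num)
  have hs21p : (0:ℝ) < Real.sqrt 21 := Real.sqrt_pos.mpr (by norm_num)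
  have h10 : Real.sqrt t / 10 ≤ Real.sqrt 2 * (Real.sqrt t / (2 * Real.sqrt 21)) := by
    have h1 : Real.sqrt t / 10 ≤ Real.sqrt t / (2 * Real.sqrt 21) := by
      apply div_le_div_of_nonneg_left (Real.sqrt_nonneg _) (by positivity)
      linarith
    have h2 : Real.sqrt t / (2 * Real.sqrt 21) ≤
        Real.sqrt 2 * (Real.sqrt t / (2 * Real.sqrt 21)) := by
      nlinarith [Real.sqrt_nonneg t, hs21p, hs2, div_nonneg (Real.sqrt_nonneg t) (by positivity : (0:ℝ) ≤ 2 * Real.sqrt 21)]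
    linarith
  have hnum : Real.sqrt t / 10 ≤ Real.arccos a - Real.arccos (a + t) := by linarith
  have hπ4 : Real.pi ≤ 4 := Real.pi_le_four
  have hπ0 : 0 < Real.pi := Real.pi_pos
  have main : Real.sqrt t / 100 ≤ (Real.arccos a - Real.arccos (a + t)) / Real.pi := by
    calc Real.sqrt t / 100 ≤ Real.sqrt t / 40 :=
          div_le_div_of_nonneg_left (Real.sqrt_nonneg _) (by norm_num) (by norm_num)
      _ = (Real.sqrt t / 10) / 4 := by ring
      _ ≤ (Real.sqrt t / 10) / Real.pi :=
          div_le_div_of_nonneg_left (div_nonneg (Real.sqrt_nonneg _) (by norm_num)) hπ0 hπ4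
      _ ≤ (Real.arccos a - Real.arccos (a + t)) / Real.pi :=
          by gcongr
  -- rewrite √t
  have hst : Real.sqrt t = Real.sqrt ((j:ℝ) * L) / (2 * N) := by
    rw [ht_def, show (4 * (N:ℝ)^2) = (2*N)^2 by ring,
      Real.sqrt_div (by positivity), Real.sqrt_sq (by positivity)]
  have hLHS : (1:ℝ)/100 * Real.sqrt ((j:ℝ) * L) / (2 * N) = Real.sqrt t / 100 := by
    rw [hst]; ring
  rw [sub_div] at main
  linarith [main, hLHS.ge, hLHS.le]
end
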